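/- For every connected graph G, the distinguishing number D(G) satisfies D(G) ≤ dim(G) + 1, where dim(G) is the metric dimension of G. -/
import Mathlib

/-- `S` is a resolving set of `G`: any two distinct vertices differ in distance
to some vertex of `S`. -/
def IsResolving {V : Type*} (G : SimpleGraph V) (S : Set V) : Prop :=
  ∀ u v : V, u ≠ v → ∃ s ∈ S, G.dist u s ≠ G.dist v s

/-- The metric dimension of `G`: minimum size of a resolving set. -/
noncomputable def metricDim {V : Type*} (G : SimpleGraph V) : ℕ :=
  sInf {n | ∃ S : Finset V, S.card = n ∧ IsResolving G ↑S}

/-- A coloring `c` is distinguishing: the only color-preserving automorphism is the identity. -/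
def IsDistinguishing {V C : Type*} (G : SimpleGraph V) (c : V → C) : Prop :=
  ∀ f : G ≃g G, (∀ v, c (f v) = c v) → ∀ v, f v = v

/-- The distinguishing number of `G`: minimum number of colors in a distinguishing coloring. -/
noncomputable def distinguishingNumber {V : Type*} (G : SimpleGraph V) : ℕ :=
  sInf {n | ∃ c : V → Fin n, IsDistinguishing G c}

/-- The join of two graphs: disjoint union plus all cross edges. -/
def graphJoin {α β : Type*} (G : SimpleGraph α) (H : SimpleGraph β) :
    SimpleGraph (α ⊕ β) := (Gᶜ ⊕g Hᶜ)ᶜ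

lemma iso_dist_le {V : Type*} (G : SimpleGraph V) (hG : G.Connected) (f : G ≃g G) (u v : V) :
    G.dist (f u) (f v) ≤ G.dist u v := by
  obtain ⟨p, hp⟩ := (hG u v).exists_walk_length_eq_dist
  calc G.dist (f u) (f v) ≤ (p.map f.toHom).length := SimpleGraph.dist_le _
    _ = G.dist u v := by rw [SimpleGraph.Walk.length_map, hp]

lemma iso_dist {V : Type*} (G : SimpleGraph V) (hG : G.Connected) (f : G ≃g G) (u v : V) :
    G.dist (f u) (f v) = G.dist u v := by
  refine le_antisymm (iso_dist_le G hG f u v) ?_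
  have := iso_dist_le G hG f.symm (f u) (f v)
  simpa using this

theorem stmt1 {V : Type*} [Fintype V] (G : SimpleGraph V) (hG : G.Connected) :
    distinguishingNumber G ≤ metricDim G + 1 := by
  classical
  -- the defining set for metricDim is nonempty: the whole vertex set resolves
  have hne : {n | ∃ S : Finset V, S.card = n ∧ IsResolving G ↑S}.Nonempty := by
    refine ⟨(Finset.univ : Finset V).card, Finset.univ, rfl, ?_⟩
    intro u v huv
    refine ⟨u, by simp, ?_⟩
    rw [SimpleGraph.dist_self]
    exact fun h => huv ((hG v u).dist_eq_zero_iff.mp h.symm).symm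
  obtain ⟨S, hScard, hSres⟩ := Nat.sInf_mem hne
  -- build a coloring with S.card + 1 colors
  let e := S.equivFin
  let c : V → Fin (S.card + 1) := fun v =>
    if h : v ∈ S then (e ⟨v, h⟩).castSucc else Fin.last _
  have hdist : IsDistinguishing G c := by
    intro f hf v
    -- f fixes each element of S
    have hfix : ∀ s ∈ S, f s = s := by
      intro s hs
      have h1 := hf s
      have h2 : f s ∈ S := by
        by_contra h2
        simp only [c, dif_pos hs, dif_neg h2] at h1
        exact (Fin.castSucc_lt_last (e ⟨s, hs⟩)).ne h1.symm
      simp only [c, dif_pos hs, dif_pos h2] at h1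
      have := e.injective (Fin.castSucc_injective _ h1)
      exact Subtype.ext_iff.mp this
    by_contra hv
    obtain ⟨s, hs, hds⟩ := hSres (f v) v hv
    apply hds
    calc G.dist (f v) s = G.dist (f v) (f s) := by rw [hfix s hs]
      _ = G.dist v s := iso_dist G hG f v s
  calc distinguishingNumber G ≤ S.card + 1 := Nat.sInf_le ⟨c, hdist⟩
    _ = metricDim G + 1 := by rw [hScard]; rfl
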